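/- arXiv:2110.10097 — 2 statements merged into one kernel-verified Lean document; each statement's English description precedes it below -/
import Mathlib

section
/- (Data-driven trajectory representation, existence.) Let (A, B, C) be a discrete-time LTI system with state dimension ns such that the pair (A, B) is controllable. Let (u^d, y^d) be a trajectory of length T of the system, let T_ini ≥ 0 and N ≥ 1 be integers, set L = T_ini + N, and assume that the input data u^d is persistently exciting of order L + ns. Then for every trajectory (u, y) of length L of the system there exists a vector g ∈ ℝ^{T−L+1} such that H_L(u^d) g equals the stacked vector of u and H_L(y^d) g equals the stacked vector of y. -/
/-!
Stack the state data `x^d(j)` on top of `H_L(u^d)`. If this matrix has full row rank, some `g`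
reproduces both the initial state `x(0)` and the input window `u`, and by linearity of the
state recursion the combined columns of `H_L(y^d)` then reproduce `y`.

For the rank, let `(ξ, η)` be a left annihilator. Because `x(j+1) = A x(j) + B u(j)`, shifting it
in time gives annihilators `(ξ Aᵟ, …)` of deeper windows. Combining the shifts `δ = 0, …, ns` with
the coefficients of the characteristic polynomial of `A` removes the state part (Cayley–Hamilton),
so persistency of excitation of order `L + ns` kills what is left. Said differently: `η`,
extended to negative times by the Markov parameters `ξ Aⁱ B`, satisfies the linear recurrence of
the characteristic polynomial; it vanishes from time `L` on, hence everywhere. So `η = 0` and `ξ`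
annihilates the controllability matrix, i.e. `ξ = 0`.
-/

open Matrix

/-- `(u, y)` is a trajectory of length `L` of the discrete-time LTI system
`(A, B, C)`: there is a state sequence `x` with `x(k+1) = A x(k) + B u(k)` and
`y(k) = C x(k)` for all `0 ≤ k ≤ L−1`. -/
def IsTrajectory {ns q p : ℕ} (A : Matrix (Fin ns) (Fin ns) ℝ)
    (B : Matrix (Fin ns) (Fin q) ℝ) (C : Matrix (Fin p) (Fin ns) ℝ)
    (L : ℕ) (u : ℕ → Fin q → ℝ) (y : ℕ → Fin p → ℝ) : Prop :=
  ∃ x : ℕ → Fin ns → ℝ,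
    ∀ k < L, x (k + 1) = A.mulVec (x k) + B.mulVec (u k) ∧ y k = C.mulVec (x k)

/-- The block Hankel matrix `H_L(ω) ∈ ℝ^{qL×(T−L+1)}` of depth `L` of a signal
`ω : {0,…,T−1} → ℝ^q`: its `((i,a), j)` entry is `ω(i+j)(a)`. -/
def hankelMat {q : ℕ} (L T : ℕ) (ω : ℕ → Fin q → ℝ) :
    Matrix (Fin L × Fin q) (Fin (T - L + 1)) ℝ :=
  Matrix.of fun ia j => ω ((ia.1 : ℕ) + (j : ℕ)) ia.2

/-- The controllability matrix `[B, AB, …, A^{ns−1}B]` of a pair `(A, B)`. -/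
noncomputable def ctrbMat {ns q : ℕ} (A : Matrix (Fin ns) (Fin ns) ℝ)
    (B : Matrix (Fin ns) (Fin q) ℝ) : Matrix (Fin ns) (Fin ns × Fin q) ℝ :=
  Matrix.of fun r kj => (A ^ (kj.1 : ℕ) * B) r kj.2

open Finset

namespace Matrix

variable {m n K : Type*} [Fintype m] [Fintype n] [Field K]

theorem vecMul_injective_of_rank_eq_card {M : Matrix m n K} (h : M.rank = Fintype.card m) :
    Function.Injective M.vecMul := by
  rw [vecMul_injective_iff, linearIndependent_iff_card_eq_finrank_span, Set.finrank,
    ← rank_eq_finrank_span_row, h]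

theorem mulVec_surjective_of_rank_eq_card {M : Matrix m n K}
    (h : M.rank = Fintype.card m) : Function.Surjective M.mulVec := by
  have : LinearMap.range M.mulVecLin = ⊤ :=
    Submodule.eq_top_of_finrank_eq (by rw [Module.finrank_fintype_fun_eq_card]; exact h)
  exact LinearMap.range_eq_top.mp this

end Matrix

theorem eq_zero_of_linear_recurrence {R V : Type*} [Ring R] [AddCommGroup V] [Module R V]
    (c : ℕ → R) (d : ℕ) (hc : IsUnit (c d)) (s : ℤ → V) (N : ℤ)
    (hs : ∀ t, N ≤ t → s t = 0) (hrec : ∀ t, ∑ δ ∈ range (d + 1), c δ • s (t - δ) = 0) :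
    s = 0 := by
  have key : ∀ k : ℕ, ∀ t, N - k ≤ t → s t = 0 := by
    intro k
    induction k with
    | zero => simpa using hs
    | succ k ih =>
      intro t ht
      obtain ht | rfl : N - k ≤ t ∨ t = N - k - 1 := by omega
      · exact ih t ht
      have hlater : ∑ δ ∈ range d, c δ • s (N - k - 1 + d - δ) = 0 :=
        sum_eq_zero fun δ hδ => by rw [ih _ (by simp at hδ; omega), smul_zero]
      have h := hrec (N - k - 1 + d)
      rwa [sum_range_succ, hlater, zero_add, add_sub_cancel_right, hc.smul_eq_zero] at h
  funext t
  exact key (N - t).toNat t (by omega)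

theorem hankelMat_mulVec_apply {q L T : ℕ} (ω : ℕ → Fin q → ℝ) (g : Fin (T - L + 1) → ℝ)
    (k : Fin L) (a : Fin q) :
    (hankelMat L T ω *ᵥ g) (k, a) = (∑ j, g j • ω (k + j)) a := by
  simp [hankelMat, mulVec, dotProduct, mul_comm]

theorem vecMul_hankelMat {q K T : ℕ} (u η : ℕ → Fin q → ℝ) :
    (fun ka : Fin K × Fin q => η ka.1 ka.2) ᵥ* hankelMat K T u =
      fun j : Fin (T - K + 1) => ∑ k ∈ range K, η k ⬝ᵥ u (k + j) := by
  funext j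
  rw [← Fin.sum_univ_eq_sum_range (fun k => η k ⬝ᵥ u (k + j))]
  simp only [vecMul, dotProduct, Fintype.sum_prod_type]
  rfl

theorem eq_zero_of_rank_hankelMat {q K T : ℕ} {u : ℕ → Fin q → ℝ} (hKT : K ≤ T)
    (hPE : (hankelMat K T u).rank = q * K) {η : ℕ → Fin q → ℝ}
    (hη : ∀ j, j + K ≤ T → ∑ k ∈ range K, η k ⬝ᵥ u (k + j) = 0) (k : ℕ) (hk : k < K) :
    η k = 0 := by
  have hinj := vecMul_injective_of_rank_eq_card (M := hankelMat K T u)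
    (by rw [hPE, Fintype.card_prod, Fintype.card_fin, Fintype.card_fin, mul_comm])
  have h0 : (fun ka : Fin K × Fin q => η ka.1 ka.2) = 0 :=
    hinj <| by
      simp only [vecMul_hankelMat, zero_vecMul]
      exact funext fun j => hη j (by omega)
  exact funext fun a => congrFun h0 (⟨k, hk⟩, a)

theorem eq_zero_of_vecMul_ctrbMat {ns q : ℕ} {A : Matrix (Fin ns) (Fin ns) ℝ}
    {B : Matrix (Fin ns) (Fin q) ℝ} (hctrb : (ctrbMat A B).rank = ns) {ξ : Fin ns → ℝ}
    (hξ : ∀ i, ξ ᵥ* (A ^ i * B) = 0) : ξ = 0 := by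
  refine vecMul_injective_of_rank_eq_card (M := ctrbMat A B) (by simp [hctrb])
    (?_ : ξ ᵥ* ctrbMat A B = 0 ᵥ* ctrbMat A B)
  rw [zero_vecMul]
  funext ⟨k, a⟩
  exact congrFun (hξ k) a

section Annihilators

variable {ns q : ℕ}

/-- `(ξ, η)` is a left annihilator of the matrix whose column `j` (for `j + K ≤ T`) stacks `x(j)`
over `u(j), …, u(j + K - 1)`; `η` is extended by zeros beyond `K`. -/
def windowAnnihilator (T K : ℕ) (x : ℕ → Fin ns → ℝ) (u : ℕ → Fin q → ℝ) :
    Submodule ℝ ((Fin ns → ℝ) × (ℕ → Fin q → ℝ)) where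
  carrier := {p | (∀ m, K ≤ m → p.2 m = 0) ∧
    ∀ j, j + K ≤ T → p.1 ⬝ᵥ x j + ∑ k ∈ range K, p.2 k ⬝ᵥ u (k + j) = 0}
  add_mem' {p p'} hp hp' := by
    refine ⟨fun m hm => ?_, fun j hj => ?_⟩
    · simp [hp.1 m hm, hp'.1 m hm]
    · simp only [Prod.fst_add, Prod.snd_add, Pi.add_apply, add_dotProduct, sum_add_distrib]
      linear_combination hp.2 j hj + hp'.2 j hj
  zero_mem' := by simp
  smul_mem' a p hp := by
    refine ⟨fun m hm => ?_, fun j hj => ?_⟩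
    · simp [hp.1 m hm]
    · simp only [Prod.smul_fst, Prod.smul_snd, Pi.smul_apply, smul_dotProduct, smul_eq_mul,
        ← mul_sum]
      linear_combination a * hp.2 j hj

variable {T : ℕ} {x : ℕ → Fin ns → ℝ} {u : ℕ → Fin q → ℝ}

theorem windowAnnihilator_mono {K K' : ℕ} (hK : K ≤ K') :
    windowAnnihilator T K x u ≤ windowAnnihilator T K' x u := by
  rintro p ⟨hsupp, hp⟩
  refine ⟨fun m hm => hsupp m (by omega), fun j hj => ?_⟩
  rw [← sum_subset (range_subset_range.mpr hK) fun k _ hk => by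
    rw [hsupp k (by simpa using hk), zero_dotProduct]]
  exact hp j (by omega)

variable (A : Matrix (Fin ns) (Fin ns) ℝ) (B : Matrix (Fin ns) (Fin q) ℝ)

def annihilatorShift (p : (Fin ns → ℝ) × (ℕ → Fin q → ℝ)) :
    (Fin ns → ℝ) × (ℕ → Fin q → ℝ) :=
  (p.1 ᵥ* A, fun | 0 => p.1 ᵥ* B | m + 1 => p.2 m)

/-- Extends `η` to negative times by the Markov parameters, `ξ Aⁱ B` at time `-1 - i`; this turns
`annihilatorShift` into a time translation (`backwardExtension_shift`). -/
def backwardExtension : (Fin ns → ℝ) × (ℕ → Fin q → ℝ) →ₗ[ℝ] ℤ → Fin q → ℝ :=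
  LinearMap.pi fun t => if 0 ≤ t then (LinearMap.proj t.toNat).comp (LinearMap.snd ℝ _ _)
    else (vecMulLinear (A ^ (-t - 1).toNat * B)).comp (LinearMap.fst ℝ _ _)

variable {A B} {p : (Fin ns → ℝ) × (ℕ → Fin q → ℝ)}

theorem shift_mem_windowAnnihilator {K : ℕ} (hx : ∀ k < T, x (k + 1) = A *ᵥ x k + B *ᵥ u k)
    (hp : p ∈ windowAnnihilator T K x u) :
    annihilatorShift A B p ∈ windowAnnihilator T (K + 1) x u := by
  obtain ⟨hsupp, hp⟩ := hp
  refine ⟨fun | 0, h => by omega | m + 1, h => hsupp m (by omega), fun j hj => ?_⟩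
  have h := hp (j + 1) (by omega)
  rw [hx j (by omega), dotProduct_add, dotProduct_mulVec, dotProduct_mulVec] at h
  simp only [annihilatorShift, sum_range_succ', zero_add]
  simp only [add_right_comm _ 1 j, add_assoc] at h ⊢
  linear_combination h

theorem iterate_shift_mem_windowAnnihilator {K : ℕ}
    (hx : ∀ k < T, x (k + 1) = A *ᵥ x k + B *ᵥ u k) (hp : p ∈ windowAnnihilator T K x u) (δ : ℕ) :
    (annihilatorShift A B)^[δ] p ∈ windowAnnihilator T (K + δ) x u := by
  induction δ with
  | zero => exact hp
  | succ δ ih =>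
    rw [Function.iterate_succ_apply']
    exact shift_mem_windowAnnihilator hx ih

theorem fst_iterate_shift (δ : ℕ) :
    ((annihilatorShift A B)^[δ] p).1 = p.1 ᵥ* A ^ δ := by
  induction δ with
  | zero => simp
  | succ δ ih => rw [Function.iterate_succ_apply', annihilatorShift, ih, vecMul_vecMul, pow_succ]

theorem backwardExtension_of_nonneg {t : ℤ} (ht : 0 ≤ t) :
    backwardExtension A B p t = p.2 t.toNat := by
  simp [backwardExtension, ht]

theorem backwardExtension_of_neg {t : ℤ} (ht : t < 0) :
    backwardExtension A B p t = p.1 ᵥ* (A ^ (-t - 1).toNat * B) := by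
  simp [backwardExtension, ht.not_ge]

theorem backwardExtension_shift (t : ℤ) :
    backwardExtension A B (annihilatorShift A B p) t = backwardExtension A B p (t - 1) := by
  rcases lt_trichotomy t 0 with ht | rfl | ht
  · rw [backwardExtension_of_neg ht, backwardExtension_of_neg (by omega),
      show (-(t - 1) - 1).toNat = (-t - 1).toNat + 1 by omega, pow_succ', Matrix.mul_assoc]
    exact vecMul_vecMul p.1 A _
  · rw [backwardExtension_of_nonneg le_rfl, backwardExtension_of_neg (by omega)]
    simp [annihilatorShift]
  · rw [backwardExtension_of_nonneg ht.le, backwardExtension_of_nonneg (by omega),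
      show t.toNat = (t - 1).toNat + 1 by omega]
    rfl

theorem backwardExtension_iterate_shift (δ : ℕ) (t : ℤ) :
    backwardExtension A B ((annihilatorShift A B)^[δ] p) t = backwardExtension A B p (t - δ) := by
  induction δ generalizing t with
  | zero => simp
  | succ δ ih =>
    rw [Function.iterate_succ_apply', backwardExtension_shift, ih]
    push_cast
    ring_nf

theorem windowAnnihilator_eq_bot {L : ℕ}
    (hctrb : (ctrbMat A B).rank = ns) (hx : ∀ k < T, x (k + 1) = A *ᵥ x k + B *ᵥ u k)
    (hT : L + ns ≤ T) (hPE : (hankelMat (L + ns) T u).rank = q * (L + ns)) :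
    windowAnnihilator T L x u = ⊥ := by
  refine eq_bot_iff.2 fun p hp => ?_
  set c := A.charpoly.coeff
  set p' := ∑ δ ∈ range (ns + 1), c δ • (annihilatorShift A B)^[δ] p
  have hp' : p' ∈ windowAnnihilator T (L + ns) x u :=
    sum_mem fun δ hδ => Submodule.smul_mem _ _ <| windowAnnihilator_mono
      (by simp at hδ; omega) (iterate_shift_mem_windowAnnihilator hx hp δ)
  have hp'_fst : p'.1 = 0 := by
    have hCH := A.aeval_self_charpoly
    rw [Polynomial.aeval_eq_sum_range' (n := ns + 1) (by simp)] at hCH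
    simp only [p', Prod.fst_sum, Prod.smul_fst, fst_iterate_shift, ← vecMul_smul, ← vecMul_sum]
    rw [show ∑ i ∈ range (ns + 1), c i • A ^ i = 0 from hCH, vecMul_zero]
  have hp'_snd : p'.2 = 0 := by
    funext m
    rcases lt_or_ge m (L + ns) with hm | hm
    · refine eq_zero_of_rank_hankelMat (by omega) hPE (fun j hj => ?_) m hm
      simpa [hp'_fst] using hp'.2 j hj
    · exact hp'.1 m hm
  have hrec : ∀ t : ℤ, ∑ δ ∈ range (ns + 1), c δ • backwardExtension A B p (t - δ) = 0 := by
    intro t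
    have h := congrArg (backwardExtension A B · t) (show p' = 0 from Prod.ext hp'_fst hp'_snd)
    simpa [p', backwardExtension_iterate_shift] using h
  have hc : c ns = 1 := by simpa [c] using (charpoly_monic A).coeff_natDegree
  have hext := eq_zero_of_linear_recurrence c ns (hc ▸ isUnit_one) _ L (fun t ht => by
      rw [backwardExtension_of_nonneg (by omega), hp.1 _ (by omega)]) hrec
  have hmarkov (i : ℕ) : p.1 ᵥ* (A ^ i * B) = 0 := by
    have h := congrFun hext (-1 - i)
    rwa [backwardExtension_of_neg (by omega), show (-(-1 - (i : ℤ)) - 1).toNat = i by omega] at h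
  refine (Submodule.mem_bot ℝ).2 (Prod.ext (eq_zero_of_vecMul_ctrbMat hctrb hmarkov) ?_)
  funext m
  simpa [backwardExtension_of_nonneg] using congrFun hext m

theorem exists_window_combination {L : ℕ} (hW : windowAnnihilator T L x u = ⊥) (x₀ : Fin ns → ℝ)
    (w : ℕ → Fin q → ℝ) :
    ∃ g : Fin (T - L + 1) → ℝ, ∑ j, g j • x j = x₀ ∧ ∀ k < L, ∑ j, g j • u (k + j) = w k := by
  set M := fromRows (of fun i (j : Fin (T - L + 1)) => x j i) (hankelMat L T u)
  have hinj : Function.Injective M.vecMul := by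
    refine (injective_iff_map_eq_zero M.vecMulLinear).2 fun v hv => ?_
    set η : ℕ → Fin q → ℝ := fun k a => if h : k < L then v (Sum.inr (⟨k, h⟩, a)) else 0
    have hvη : v ∘ Sum.inr = fun ka : Fin L × Fin q => η ka.1 ka.2 := by
      funext ka
      simp [η]
    have hmem : (v ∘ Sum.inl, η) ∈ windowAnnihilator T L x u := by
      refine ⟨fun m hm => funext fun a => dif_neg (by omega), fun j hj => ?_⟩
      have h : (v ᵥ* M) ⟨j, by omega⟩ = 0 := congrFun hv _
      simp only [M, vecMul_fromRows, hvη, vecMul_hankelMat, Pi.add_apply] at h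
      exact h
    rw [hW, Submodule.mem_bot, Prod.ext_iff] at hmem
    funext r
    rcases r with i | ⟨k, a⟩
    · exact congrFun hmem.1 i
    · simpa [η] using congrFun (congrFun hmem.2 k) a
  obtain ⟨g, hg⟩ := mulVec_surjective_of_rank_eq_card (vecMul_injective_iff.1 hinj).rank_matrix
    (Sum.elim x₀ fun ka : Fin L × Fin q => w ka.1 ka.2)
  refine ⟨g, funext fun i => ?_, fun k hk => funext fun a => ?_⟩
  · simpa [M, mulVec, dotProduct, mul_comm] using congrFun hg (Sum.inl i)
  · simpa [M, hankelMat_mulVec_apply] using congrFun hg (Sum.inr (⟨k, hk⟩, a))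

end Annihilators

theorem sum_smul_shifted_state_eq {ns q T L : ℕ} {A : Matrix (Fin ns) (Fin ns) ℝ}
    {B : Matrix (Fin ns) (Fin q) ℝ} {xd x : ℕ → Fin ns → ℝ} {ud u : ℕ → Fin q → ℝ}
    (hxd : ∀ k < T, xd (k + 1) = A *ᵥ xd k + B *ᵥ ud k)
    (hx : ∀ k < L, x (k + 1) = A *ᵥ x k + B *ᵥ u k) (hLT : L ≤ T) (g : Fin (T - L + 1) → ℝ)
    (h₀ : ∑ j, g j • xd j = x 0) (hu : ∀ k < L, ∑ j, g j • ud (k + j) = u k) :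
    ∀ k ≤ L, ∑ j, g j • xd (k + j) = x k := by
  intro k hk
  induction k with
  | zero => simpa using h₀
  | succ k ih =>
    calc ∑ j, g j • xd (k + 1 + j)
        = ∑ j, g j • (A *ᵥ xd (k + j) + B *ᵥ ud (k + j)) :=
          sum_congr rfl fun j _ => by rw [add_right_comm, hxd _ (by omega)]
      _ = A *ᵥ ∑ j, g j • xd (k + j) + B *ᵥ ∑ j, g j • ud (k + j) := by
          simp only [mulVec_sum, mulVec_smul, smul_add, sum_add_distrib]
      _ = x (k + 1) := by rw [ih (by omega), hu k (by omega), hx k (by omega)]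

theorem fundamental_lemma_existence_general
    {ns q p : ℕ} (A : Matrix (Fin ns) (Fin ns) ℝ) (B : Matrix (Fin ns) (Fin q) ℝ)
    (C : Matrix (Fin p) (Fin ns) ℝ)
    (hctrb : (ctrbMat A B).rank = ns)
    (T Tini N : ℕ) (hT : Tini + N + ns ≤ T)
    (ud : ℕ → Fin q → ℝ) (yd : ℕ → Fin p → ℝ)
    (htraj : IsTrajectory A B C T ud yd)
    (hPE : (hankelMat (Tini + N + ns) T ud).rank = q * (Tini + N + ns)) :
    ∀ (u : ℕ → Fin q → ℝ) (y : ℕ → Fin p → ℝ),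
      IsTrajectory A B C (Tini + N) u y →
      ∃ g : Fin (T - (Tini + N) + 1) → ℝ,
        (∀ (k : Fin (Tini + N)) (a : Fin q),
          (hankelMat (Tini + N) T ud).mulVec g (k, a) = u (k : ℕ) a) ∧
        (∀ (k : Fin (Tini + N)) (b : Fin p),
          (hankelMat (Tini + N) T yd).mulVec g (k, b) = y (k : ℕ) b) := by
  rintro u y ⟨x, hx⟩
  obtain ⟨xd, hxd⟩ := htraj
  have hW := windowAnnihilator_eq_bot hctrb (fun k hk => (hxd k hk).1) hT hPE
  obtain ⟨g, hg₀, hgu⟩ := exists_window_combination hW (x 0) u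
  have hstate := sum_smul_shifted_state_eq (fun k hk => (hxd k hk).1) (fun k hk => (hx k hk).1)
    (by omega) g hg₀ hgu
  refine ⟨g, fun k a => ?_, fun k b => ?_⟩
  · rw [hankelMat_mulVec_apply, hgu k k.isLt]
  · have hyd : ∑ j, g j • yd (k + j) = C *ᵥ ∑ j, g j • xd (k + j) := by
      rw [mulVec_sum]
      exact sum_congr rfl fun j _ => by rw [(hxd _ (by omega)).2, mulVec_smul]
    rw [hankelMat_mulVec_apply, hyd, hstate k k.isLt.le, (hx k k.isLt).2]

/-- **Fundamental lemma (existence part).** Suppose `(A, B)` is controllable,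
`(u^d, y^d)` is a trajectory of length `T` of `(A, B, C)`, `N ≥ 1`,
`L = T_ini + N`, `L + ns ≤ T`, and `u^d` is persistently exciting of order
`L + ns` (its Hankel matrix of depth `L + ns` has full row rank `q(L + ns)`).
Then every trajectory `(u, y)` of length `L` of the system can be written as
`(H_L(u^d) g, H_L(y^d) g)` for some `g ∈ ℝ^{T−L+1}`. -/
theorem fundamental_lemma_existence
    {ns q p : ℕ} (A : Matrix (Fin ns) (Fin ns) ℝ) (B : Matrix (Fin ns) (Fin q) ℝ)
    (C : Matrix (Fin p) (Fin ns) ℝ)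
    (hctrb : (ctrbMat A B).rank = ns)
    (T Tini N : ℕ) (hN : 1 ≤ N) (hT : Tini + N + ns ≤ T)
    (ud : ℕ → Fin q → ℝ) (yd : ℕ → Fin p → ℝ)
    (htraj : IsTrajectory A B C T ud yd)
    (hPE : (hankelMat (Tini + N + ns) T ud).rank = q * (Tini + N + ns)) :
    ∀ (u : ℕ → Fin q → ℝ) (y : ℕ → Fin p → ℝ),
      IsTrajectory A B C (Tini + N) u y →
      ∃ g : Fin (T - (Tini + N) + 1) → ℝ,
        (∀ (k : Fin (Tini + N)) (a : Fin q),
          (hankelMat (Tini + N) T ud).mulVec g (k, a) = u (k : ℕ) a) ∧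
        (∀ (k : Fin (Tini + N)) (b : Fin p),
          (hankelMat (Tini + N) T yd).mulVec g (k, b) = y (k : ℕ) b) :=
  fundamental_lemma_existence_general A B C hctrb T Tini N hT ud yd htraj hPE
end

section
/- (Data-driven trajectory representation, uniqueness.) Let (A, B, C) be a discrete-time LTI system with state dimension ns such that the pair (A, C) is observable, and let T_ini ≥ ns and N ≥ 1 be integers. If (u, y) and (u, y′) are two trajectories of length T_ini + N of the system with the same input sequence u, and if y(k) = y′(k) for all 0 ≤ k ≤ T_ini − 1, then y(k) = y′(k) for all 0 ≤ k ≤ T_ini + N − 1; that is, the future output is uniquely determined by the past input/output data of length T_ini together with the future input. -/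
open Matrix

/-- The observability matrix `col(C, CA, …, CA^{ns−1})` of a pair `(A, C)`. -/
noncomputable def obsvMat {ns p : ℕ} (A : Matrix (Fin ns) (Fin ns) ℝ)
    (C : Matrix (Fin p) (Fin ns) ℝ) : Matrix (Fin ns × Fin p) (Fin ns) ℝ :=
  Matrix.of fun kj c => (C * A ^ (kj.1 : ℕ)) kj.2 c

/-- **Uniqueness of the data-driven representation.** If `(A, C)` is observable,
`T_ini ≥ ns`, `N ≥ 1`, and `(u, y)`, `(u, y′)` are trajectories of length
`T_ini + N` of `(A, B, C)` sharing the same input and agreeing on the first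
`T_ini` outputs, then they agree on all `T_ini + N` outputs: the future output is
uniquely determined by the past data together with the future input. -/
theorem fundamental_lemma_uniqueness
    {ns q p : ℕ} (A : Matrix (Fin ns) (Fin ns) ℝ) (B : Matrix (Fin ns) (Fin q) ℝ)
    (C : Matrix (Fin p) (Fin ns) ℝ)
    (hobs : (obsvMat A C).rank = ns)
    (Tini N : ℕ) (hTini : ns ≤ Tini) (hN : 1 ≤ N)
    (u : ℕ → Fin q → ℝ) (y y' : ℕ → Fin p → ℝ)
    (h1 : IsTrajectory A B C (Tini + N) u y)
    (h2 : IsTrajectory A B C (Tini + N) u y')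
    (hpast : ∀ k < Tini, y k = y' k) :
    ∀ k < Tini + N, y k = y' k := by
  obtain ⟨x, hx⟩ := h1
  obtain ⟨x', hx'⟩ := h2
  -- difference of states
  set d : ℕ → Fin ns → ℝ := fun k => x k - x' k with hd
  have hdrec : ∀ k < Tini + N, d (k + 1) = A.mulVec (d k) := by
    intro k hk
    have e1 := (hx k hk).1
    have e2 := (hx' k hk).1
    simp only [hd, e1, e2, Matrix.mulVec_sub]
    abel
  have hdpow : ∀ k ≤ Tini + N, d k = (A ^ k).mulVec (d 0) := by
    intro k hk
    induction k with
    | zero => simp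
    | succ n ih =>
      have hn : n < Tini + N := by omega
      rw [hdrec n hn, ih (le_of_lt hn), pow_succ', ← Matrix.mulVec_mulVec]
  -- C annihilates d k for k < Tini
  have hCd : ∀ k < Tini, C.mulVec (d k) = 0 := by
    intro k hk
    have hk' : k < Tini + N := by omega
    have e1 := (hx k hk').2
    have e2 := (hx' k hk').2
    have := hpast k hk
    simp only [hd, Matrix.mulVec_sub, ← e1, ← e2, this, sub_self]
  -- observability matrix kills d 0
  have hOd : (obsvMat A C).mulVec (d 0) = 0 := by
    funext kj
    have hk : (kj.1 : ℕ) < Tini := lt_of_lt_of_le kj.1.isLt hTini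
    have := hCd (kj.1 : ℕ) hk
    have hdk := hdpow (kj.1 : ℕ) (by omega)
    rw [hdk] at this
    have : (C * A ^ (kj.1 : ℕ)).mulVec (d 0) = 0 := by
      rw [← Matrix.mulVec_mulVec]; exact this
    have := congrFun this kj.2
    simpa [obsvMat, Matrix.mulVec, dotProduct] using this
  -- injectivity from rank
  have hinj : Function.Injective (obsvMat A C).mulVecLin := by
    rw [← LinearMap.ker_eq_bot]
    have hrn := (obsvMat A C).mulVecLin.finrank_range_add_finrank_ker
    rw [Matrix.rank] at hobs
    have hdom : Module.finrank ℝ (Fin ns → ℝ) = ns := by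
      simp [Module.finrank_fintype_fun_eq_card]
    rw [hobs, hdom] at hrn
    have : Module.finrank ℝ (LinearMap.ker (obsvMat A C).mulVecLin) = 0 := by omega
    exact Submodule.finrank_eq_zero.mp this
  have hd0 : d 0 = 0 := by
    apply hinj
    simpa [Matrix.mulVecLin] using hOd
  -- hence d k = 0 for all relevant k, so outputs agree
  intro k hk
  have hdk : d k = 0 := by
    rw [hdpow k (le_of_lt hk), hd0, Matrix.mulVec_zero]
  have hxx : x k = x' k := sub_eq_zero.mp hdk
  rw [(hx k hk).2, (hx' k hk).2, hxx]
end
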